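/- arXiv:1406.5376 — 5 statements merged into one kernel-verified Lean document; each statement's English description precedes it below -/
import Mathlib

section
/- Let G be a connected c-edge-coloured multigraph, c ≥ 2, one of whose colours is called red. Suppose G contains a proper path P = x_1 y_1 x_2 y_2 … x_p y_p with p ≥ 3 vertices-pairs, in which every edge x_i y_i (i = 1,…,p) is red. If G contains no proper cycle C with vertex set exactly V(P), then for each of the c−1 colours different from red there are at least 2p−2 missing edges of that colour among the vertices of G; hence in total G has at least (c−1)(2p−2) missing edges in colours different from red. -/
/-!  A `c`-edge-coloured multigraph on a vertex type `V` is modelled as a family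
`G : Fin c → SimpleGraph V`, where `G i` is the simple graph formed by the edges
of colour `i` (no two parallel edges of the same colour). -/

/-- Total number of edges of a `c`-edge-coloured multigraph: the sum of the
numbers of edges of the colour classes. -/
noncomputable def numEdges {V : Type*} {c : ℕ} (G : Fin c → SimpleGraph V) : ℕ :=
  ∑ i : Fin c, (G i).edgeSet.ncard

/-- The rainbow degree of a vertex: the number of distinct colours appearing on
edges incident to it. -/
noncomputable def rainbowDeg {V : Type*} {c : ℕ} (G : Fin c → SimpleGraph V) (x : V) : ℕ :=
  {i : Fin c | ∃ y, (G i).Adj x y}.ncard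

/-- The rainbow degree of the multigraph: the minimum rainbow degree over all vertices. -/
noncomputable def minRainbowDeg {V : Type*} {c : ℕ} (G : Fin c → SimpleGraph V) : ℕ :=
  sInf (Set.range (rainbowDeg G))

/-- The total degree of a vertex: the number of edges incident to it, over all colours. -/
noncomputable def totalDeg {V : Type*} {c : ℕ} (G : Fin c → SimpleGraph V) (x : V) : ℕ :=
  ∑ i : Fin c, ((G i).neighborSet x).ncard

/-- `v 0, v 1, …, v (m-1)`, with edge `k` (joining `v k` and `v (k+1)`) taken in colour
`κ k`, is a proper path on `m` (distinct) vertices: consecutive edges get distinct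
colours. -/
def IsProperPathOn {V : Type*} {c : ℕ} (G : Fin c → SimpleGraph V) (m : ℕ)
    (v : ℕ → V) (κ : ℕ → Fin c) : Prop :=
  Set.InjOn v (Set.Iio m) ∧
  (∀ i, i + 1 < m → (G (κ i)).Adj (v i) (v (i + 1))) ∧
  (∀ i, i + 2 < m → κ i ≠ κ (i + 1))

/-- `G` has a proper Hamiltonian path: a proper path through all the vertices. -/
def HasProperHamPath {V : Type*} [Fintype V] {c : ℕ} (G : Fin c → SimpleGraph V) : Prop :=
  ∃ (v : ℕ → V) (κ : ℕ → Fin c),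
    IsProperPathOn G (Fintype.card V) v κ ∧ ∀ x : V, ∃ i < Fintype.card V, v i = x

/-- `G` has a proper cycle whose vertex set is exactly `S`. -/
def HasProperCycleOn {V : Type*} {c : ℕ} (G : Fin c → SimpleGraph V) (S : Set V) : Prop :=
  ∃ (m : ℕ) (w : ZMod m → V) (μ : ZMod m → Fin c),
    3 ≤ m ∧ Function.Injective w ∧ Set.range w = S ∧
    (∀ i, (G (μ i)).Adj (w i) (w (i + 1))) ∧
    (∀ i, μ i ≠ μ (i + 1))

/-- A proper path `x_1 y_1 x_2 y_2 … x_q y_q` (on `2q` vertices) compatible with a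
set `M` of red edges: its edges are alternately in `M` (these being red) and not
in `M`, beginning and ending with an edge of `M`. -/
def IsCompatiblePath {V : Type*} {c : ℕ} (G : Fin c → SimpleGraph V) (red : Fin c)
    (M : Set (Sym2 V)) (q : ℕ) (w : ℕ → V) (μ : ℕ → Fin c) : Prop :=
  IsProperPathOn G (2 * q) w μ ∧
  (∀ j, j < q → μ (2 * j) = red ∧ s(w (2 * j), w (2 * j + 1)) ∈ M) ∧
  (∀ j, j + 1 < q → s(w (2 * j + 1), w (2 * j + 2)) ∉ M)

/-! Write `x_j = v (2j - 2)`, `y_j = v (2j - 1)` and fix a colour `i ≠ red`. A Hamiltonian path of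
`V(P)` alternating between the red edges `x_j y_j` and edges of other colours closes into a proper
cycle through an `i`-edge joining its ends; it remains such a path when reversed, and under the Pósa
rotation along an `i`-edge at its first vertex. As `V(P)` carries no proper cycle, the ends of every
path obtained from `P` by a reversal and at most two rotations are not `i`-adjacent.

Let `S` (resp. `T`) be the set of `j < p` for which `x_1 x_{j+1}` (resp. `y_j y_p`) is an `i`-edge.
One rotation shows that `S` and `T` are disjoint, so `x_1 y_p` and the `2p - 2 - |S| - |T|` pairs
`x_1 x_{j+1}` (`j ∉ S`) and `y_j y_p` (`j ∉ T`) are missing. Two rotations show that for `k ∈ S`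
and each `j < k` one of `y_j y_k`, `x_{j+1} y_p` is missing, that for `l ∈ T` and each `l < j < p`
one of `x_{l+1} x_{j+1}`, `x_1 y_j` is missing, and that `y_j x_{l+1}` is missing for `j ∈ S`,
`l ∈ T`, `j < l`. These lie in disjoint classes of pairs and add up to at least `2p - 2`. -/

open Finset

section RedAltPath

variable {V : Type*} {c : ℕ}

def IsRedAltPath (G : Fin c → SimpleGraph V) (red : Fin c) (q : ℕ) (w : ℕ → V) (μ : ℕ → Fin c) :
    Prop :=
  IsProperPathOn G (2 * q) w μ ∧ ∀ j < q, μ (2 * j) = red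

variable {G : Fin c → SimpleGraph V} {red i : Fin c} {q : ℕ} {w : ℕ → V} {μ : ℕ → Fin c}

namespace IsRedAltPath

lemma eq_red_of_mod_two (h : IsRedAltPath G red q w μ) {t : ℕ} (ht : t < 2 * q) (he : t % 2 = 0) :
    μ t = red := by
  simpa [Nat.mul_div_cancel' (Nat.dvd_of_mod_eq_zero he)] using h.2 (t / 2) (by omega)

lemma reindex {σ : ℕ → ℕ} {ν : ℕ → Fin c} (h : IsRedAltPath G red q w μ)
    (hσ : ∀ t < 2 * q, σ t < 2 * q ∧ σ (σ t) = t)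
    (hadj : ∀ t, t + 1 < 2 * q → (G (ν t)).Adj (w (σ t)) (w (σ (t + 1))))
    (hprop : ∀ t, t + 2 < 2 * q → ν t ≠ ν (t + 1)) (hred : ∀ j < q, ν (2 * j) = red) :
    IsRedAltPath G red q (fun t => w (σ t)) ν ∧
      (fun t => w (σ t)) '' Set.Iio (2 * q) = w '' Set.Iio (2 * q) := by
  have hbij : Set.BijOn σ (Set.Iio (2 * q)) (Set.Iio (2 * q)) :=
    Set.InvOn.bijOn ⟨fun t ht => (hσ t ht).2, fun t ht => (hσ t ht).2⟩
      (fun t ht => (hσ t ht).1) (fun t ht => (hσ t ht).1)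
  refine ⟨⟨⟨h.1.1.comp hbij.injOn hbij.mapsTo, hadj, hprop⟩, hred⟩, ?_⟩
  rw [← Set.image_image w σ, hbij.image_eq]

theorem reverse (h : IsRedAltPath G red q w μ) :
    IsRedAltPath G red q (fun t => w (2 * q - 1 - t)) (fun t => μ (2 * q - 2 - t)) ∧
      (fun t => w (2 * q - 1 - t)) '' Set.Iio (2 * q) = w '' Set.Iio (2 * q) := by
  refine h.reindex (fun t ht => ⟨by omega, by omega⟩) (fun t ht => ?_) (fun t ht => ?_)
    (fun j hj => h.eq_red_of_mod_two (by omega) (by omega))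
  · convert (h.1.2.1 (2 * q - 2 - t) (by omega)).symm using 2 <;> omega
  · convert (h.1.2.2 (2 * q - 3 - t) (by omega)).symm using 2 <;> omega

-- Pósa rotation: reverse `w 0 … w (2k-1)` and attach it to `w (2k)` through the `i`-edge at `w 0`.
theorem rotate (h : IsRedAltPath G red q w μ) (hi : i ≠ red) {k : ℕ} (hkq : k < q)
    (hchord : (G i).Adj (w 0) (w (2 * k))) :
    IsRedAltPath G red q (fun t => w (if t < 2 * k then 2 * k - 1 - t else t))
      (fun t => if t + 1 < 2 * k then μ (2 * k - 2 - t) else if t + 1 = 2 * k then i else μ t) ∧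
      (fun t => w (if t < 2 * k then 2 * k - 1 - t else t)) '' Set.Iio (2 * q) =
        w '' Set.Iio (2 * q) := by
  refine h.reindex (fun t ht => ⟨by split_ifs <;> omega, by split_ifs <;> omega⟩)
    (fun t ht => ?_) (fun t ht => ?_) (fun j hj => ?_)
  · rcases lt_trichotomy (t + 1) (2 * k) with htk | htk | htk
    · simp only [htk, show t < 2 * k by omega, ↓reduceIte]
      convert (h.1.2.1 (2 * k - 2 - t) (by omega)).symm using 2 <;> omega
    · simp only [show ¬ t + 1 < 2 * k by omega, show t < 2 * k by omega, if_pos htk, ↓reduceIte]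
      convert hchord using 2; omega
    · simp only [show ¬ t + 1 < 2 * k by omega, show ¬ t < 2 * k by omega,
        show t + 1 ≠ 2 * k by omega, ↓reduceIte]
      exact h.1.2.1 t ht
  · rcases lt_trichotomy (t + 2) (2 * k) with htk | htk | htk
    · simp only [show t + 1 < 2 * k by omega, show t + 1 + 1 < 2 * k by omega, ↓reduceIte]
      convert (h.1.2.2 (2 * k - 3 - t) (by omega)).symm using 2 <;> omega
    · simp only [show t + 1 < 2 * k by omega, show ¬ t + 1 + 1 < 2 * k by omega,
        if_pos (show t + 1 + 1 = 2 * k by omega), ↓reduceIte,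
        h.eq_red_of_mod_two (show 2 * k - 2 - t < 2 * q by omega) (by omega)]
      exact hi.symm
    · by_cases htk' : t + 1 = 2 * k
      · simp only [show ¬ t + 1 < 2 * k by omega, if_pos htk', show ¬ t + 1 + 1 < 2 * k by omega,
          show t + 1 + 1 ≠ 2 * k by omega, ↓reduceIte,
          h.eq_red_of_mod_two (show t + 1 < 2 * q by omega) (by omega)]
        exact hi
      · simp only [show ¬ t + 1 < 2 * k by omega, if_neg htk', show ¬ t + 1 + 1 < 2 * k by omega,
          show t + 1 + 1 ≠ 2 * k by omega, ↓reduceIte]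
        exact h.1.2.2 t ht
  · simp only [show 2 * j + 1 ≠ 2 * k by omega, ↓reduceIte]
    split_ifs
    · exact h.eq_red_of_mod_two (by omega) (by omega)
    · exact h.2 j hj

theorem hasProperCycleOn (h : IsRedAltPath G red q w μ) (hq : 2 ≤ q) (hi : i ≠ red)
    (hadj : (G i).Adj (w (2 * q - 1)) (w 0)) : HasProperCycleOn G (w '' Set.Iio (2 * q)) := by
  obtain ⟨hinj, hpadj, hprop⟩ := h.1
  have : NeZero (2 * q) := ⟨by omega⟩
  have : Fact (1 < 2 * q) := ⟨by omega⟩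
  have hval : ∀ z : ZMod (2 * q), (z + 1).val = (z.val + 1) % (2 * q) := fun z => by
    rw [ZMod.val_add, ZMod.val_one]
  refine ⟨2 * q, fun z => w z.val, fun z => if z.val = 2 * q - 1 then i else μ z.val,
    by omega, fun z₁ z₂ hz => ZMod.val_injective _ (hinj (ZMod.val_lt z₁) (ZMod.val_lt z₂) hz),
    ?_, fun z => ?_, fun z => ?_⟩
  · ext x
    refine ⟨?_, ?_⟩
    · rintro ⟨z, rfl⟩
      exact ⟨z.val, ZMod.val_lt z, rfl⟩
    · rintro ⟨t, ht, rfl⟩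
      exact ⟨t, by simp [ZMod.val_cast_of_lt (Set.mem_Iio.1 ht)]⟩
  · dsimp only
    rw [hval]
    have := ZMod.val_lt z
    by_cases hz : z.val = 2 * q - 1
    · simpa [hz, show 2 * q - 1 + 1 = 2 * q by omega] using hadj
    · rw [if_neg hz, Nat.mod_eq_of_lt (by omega)]
      exact hpadj _ (by omega)
  · dsimp only
    rw [hval]
    have := ZMod.val_lt z
    by_cases hz : z.val = 2 * q - 1
    · rw [if_pos hz, hz, show 2 * q - 1 + 1 = 2 * q by omega, Nat.mod_self, if_neg (by omega),
        h.2 0 (by omega)]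
      exact hi
    · rw [if_neg hz, Nat.mod_eq_of_lt (by omega)]
      by_cases hz' : z.val + 1 = 2 * q - 1
      · rw [if_pos hz', h.eq_red_of_mod_two (by omega) (by omega)]
        exact hi.symm
      · rw [if_neg hz']
        exact hprop _ (by omega)

theorem not_adj_first_last (h : IsRedAltPath G red q w μ) (hq : 2 ≤ q) (hi : i ≠ red)
    (hno : ¬ HasProperCycleOn G (w '' Set.Iio (2 * q))) : ¬ (G i).Adj (w 0) (w (2 * q - 1)) :=
  fun hadj => hno (h.hasProperCycleOn hq hi hadj.symm)

theorem not_adj_last_of_adj_first (h : IsRedAltPath G red q w μ) (hq : 2 ≤ q) (hi : i ≠ red)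
    (hno : ¬ HasProperCycleOn G (w '' Set.Iio (2 * q))) {k : ℕ} (hkq : k < q)
    (hchord : (G i).Adj (w 0) (w (2 * k))) : ¬ (G i).Adj (w (2 * k - 1)) (w (2 * q - 1)) := by
  have hk : k ≠ 0 := by rintro rfl; exact hchord.ne rfl
  obtain ⟨hrot, himg⟩ := h.rotate hi hkq hchord
  simpa [show 0 < 2 * k by omega, show ¬ 2 * q - 1 < 2 * k by omega] using
    hrot.not_adj_first_last hq hi (himg ▸ hno)

theorem not_adj_odd_even (h : IsRedAltPath G red q w μ) (hq : 2 ≤ q)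
    (hi : i ≠ red) (hno : ¬ HasProperCycleOn G (w '' Set.Iio (2 * q))) {j k : ℕ} (hjk : j < k)
    (hkq : k < q) (hj : (G i).Adj (w 0) (w (2 * j)))
    (hk : (G i).Adj (w (2 * k - 1)) (w (2 * q - 1))) :
    ¬ (G i).Adj (w (2 * j - 1)) (w (2 * k)) := by
  obtain ⟨hrot, himg⟩ := h.rotate hi (hjk.trans hkq) hj
  have hj₀ : j ≠ 0 := by rintro rfl; exact hj.ne rfl
  have := hrot.not_adj_last_of_adj_first hq hi (himg ▸ hno) hkq
  simp only [if_pos (show 0 < 2 * j by omega), if_neg (show ¬ 2 * k < 2 * j by omega),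
    if_neg (show ¬ 2 * k - 1 < 2 * j by omega), if_neg (show ¬ 2 * q - 1 < 2 * j by omega),
    Nat.sub_zero] at this
  exact fun h' => this h' hk

theorem not_adj_odd_odd (h : IsRedAltPath G red q w μ) (hq : 2 ≤ q)
    (hi : i ≠ red) (hno : ¬ HasProperCycleOn G (w '' Set.Iio (2 * q))) {j k : ℕ} (hj₀ : j ≠ 0)
    (hjk : j < k) (hkq : k < q) (hk : (G i).Adj (w 0) (w (2 * k)))
    (hj : (G i).Adj (w (2 * j)) (w (2 * q - 1))) : ¬ (G i).Adj (w (2 * j - 1)) (w (2 * k - 1)) := by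
  obtain ⟨hrot, himg⟩ := h.rotate hi hkq hk
  have := hrot.not_adj_last_of_adj_first hq hi (himg ▸ hno) (show k - j < q by omega)
  simp only [if_pos (show 0 < 2 * k by omega), if_pos (show 2 * (k - j) < 2 * k by omega),
    if_pos (show 2 * (k - j) - 1 < 2 * k by omega), if_neg (show ¬ 2 * q - 1 < 2 * k by omega),
    Nat.sub_zero, show 2 * k - 1 - 2 * (k - j) = 2 * j - 1 by omega,
    show 2 * k - 1 - (2 * (k - j) - 1) = 2 * j by omega] at this
  exact fun h' => this h'.symm hj

theorem not_adj_even_even (h : IsRedAltPath G red q w μ) (hq : 2 ≤ q)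
    (hi : i ≠ red) (hno : ¬ HasProperCycleOn G (w '' Set.Iio (2 * q))) {l j : ℕ} (hl₀ : l ≠ 0)
    (hlj : l < j) (hjq : j < q) (hl : (G i).Adj (w (2 * l - 1)) (w (2 * q - 1)))
    (hj : (G i).Adj (w 0) (w (2 * j - 1))) : ¬ (G i).Adj (w (2 * l)) (w (2 * j)) := by
  obtain ⟨hrev, himg⟩ := h.reverse
  have := hrev.not_adj_odd_odd hq hi (himg ▸ hno) (j := q - j) (k := q - l)
    (by omega) (by omega) (by omega)
  simp only [Nat.sub_zero, Nat.sub_self, show 2 * q - 1 - 2 * (q - l) = 2 * l - 1 by omega,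
    show 2 * q - 1 - 2 * (q - j) = 2 * j - 1 by omega,
    show 2 * q - 1 - (2 * (q - j) - 1) = 2 * j by omega,
    show 2 * q - 1 - (2 * (q - l) - 1) = 2 * l by omega] at this
  exact fun h' => this hl.symm hj.symm h'.symm

end IsRedAltPath

end RedAltPath

lemma card_le_card_of_forall_mem_or {α β : Type*} {s : Finset α} {t : Finset β} {f g : α → β}
    (hf : Set.InjOn f s) (hg : Set.InjOn g s) (hfg : ∀ a ∈ s, ∀ b ∈ s, f a ≠ g b)
    (h : ∀ a ∈ s, f a ∈ t ∨ g a ∈ t) : #s ≤ #t := by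
  classical
  refine card_le_card_of_injOn (fun a => if f a ∈ t then f a else g a) (fun a ha => ?_)
    (fun a ha b hb hab => ?_)
  · dsimp only
    split_ifs with hfa
    exacts [hfa, (h a ha).resolve_left hfa]
  · dsimp only at hab
    split_ifs at hab
    exacts [hf ha hb hab, absurd hab (hfg a ha b hb), absurd hab.symm (hfg b hb a ha),
      hg ha hb hab]

lemma sum_card_filter_le_card {ι α : Type*} [Fintype ι] (s : Finset α) (R : ι → α → Prop)
    [∀ k, DecidablePred (R k)] (hR : ∀ x k l, R k x → R l x → k = l) :
    ∑ k, #(s.filter (R k)) ≤ #s := by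
  classical
  rw [← card_biUnion fun k _ l _ hkl => disjoint_filter.2 fun x _ hk hl => hkl (hR x k l hk hl)]
  exact card_le_card (biUnion_subset.2 fun k _ => filter_subset _ _)

lemma card_le_of_forall_mem_Icc {S : Finset ℕ} {a b : ℕ} (h : ∀ x ∈ S, a ≤ x ∧ x ≤ b) :
    #S ≤ b + 1 - a := by
  simpa using card_le_card fun x hx => mem_Icc.2 (h x hx)

lemma card_add_card_le_of_forall_le {p n₄ n₅ n₆ : ℕ} {S T : Finset ℕ} (hS : ∀ j ∈ S, 1 ≤ j)
    (hT : ∀ l ∈ T, 1 ≤ l ∧ l < p) (hST : Disjoint S T) (h₄ : ∀ k ∈ S, k - 1 ≤ n₄)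
    (h₅ : ∀ l ∈ T, p - 1 - l ≤ n₅) (h₆ : ∀ j ∈ S, ∀ k ∈ T, j < k → 1 ≤ n₆) :
    #S + #T ≤ n₄ + n₅ + n₆ + 1 := by
  have hTcard : #T ≤ p - 1 + 1 - (p - 1 - n₅) := card_le_of_forall_mem_Icc fun l hl => by
    have := hT l hl; have := h₅ l hl; omega
  have hScard : #S ≤ n₄ + 1 + 1 - 1 := card_le_of_forall_mem_Icc fun k hk => by
    have := hS k hk; have := h₄ k hk; omega
  by_cases hlink : ∃ j ∈ S, ∃ k ∈ T, j < k
  · obtain ⟨j, hj, k, hk, hjk⟩ := hlink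
    have := h₆ j hj k hk hjk
    omega
  · push Not at hlink
    obtain rfl | ⟨l, hl⟩ := T.eq_empty_or_nonempty
    · simp only [card_empty]; omega
    -- all of `S` lies above `l ≥ 1`, which saves one
    have : #S ≤ n₄ + 1 + 1 - 2 := card_le_of_forall_mem_Icc fun k hk => by
      have := h₄ k hk; have := hlink k hk l hl; have := (hT l hl).1
      have : k ≠ l := fun h => disjoint_left.1 hST hk (h ▸ hl)
      omega
    omega

open Classical in
noncomputable def nonAdjPairs (E : ℕ → ℕ → Prop) (n : ℕ) : Finset (ℕ × ℕ) :=
  {x ∈ range n ×ˢ range n | x.1 < x.2 ∧ ¬ E x.1 x.2}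

@[simp]
lemma mem_nonAdjPairs {E : ℕ → ℕ → Prop} {n : ℕ} {x : ℕ × ℕ} :
    x ∈ nonAdjPairs E n ↔ x.1 < x.2 ∧ x.2 < n ∧ ¬ E x.1 x.2 := by
  unfold nonAdjPairs
  simp only [mem_filter, mem_product, mem_range]
  exact ⟨fun ⟨⟨_, h⟩, h'⟩ => ⟨h'.1, h, h'.2⟩, fun ⟨h₁, h₂, h₃⟩ => ⟨⟨by omega, h₂⟩, h₁, h₃⟩⟩

-- With `x_j = 2j - 2` and `y_j = 2j - 1`, the classes are `x_1 y_p`, `x_1 x_*`, `y_* y_p`,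
-- `y y` or `x y_p`, `x x` or `x_1 y`, and `y x`.
def pairClass (p : ℕ) : Fin 6 → ℕ × ℕ → Prop := ![
  fun x => x.1 = 0 ∧ x.2 = 2 * p - 1,
  fun x => x.1 = 0 ∧ x.2 % 2 = 0,
  fun x => x.1 % 2 = 1 ∧ x.2 = 2 * p - 1,
  fun x => x.1 % 2 = 1 ∧ x.2 % 2 = 1 ∧ x.2 ≠ 2 * p - 1 ∨ x.1 ≠ 0 ∧ x.1 % 2 = 0 ∧ x.2 = 2 * p - 1,
  fun x => x.1 ≠ 0 ∧ x.1 % 2 = 0 ∧ x.2 % 2 = 0 ∨ x.1 = 0 ∧ x.2 % 2 = 1 ∧ x.2 ≠ 2 * p - 1,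
  fun x => x.1 % 2 = 1 ∧ x.2 % 2 = 0]

lemma eq_of_pairClass {p : ℕ} (hp : 1 ≤ p) {x : ℕ × ℕ} {k l : Fin 6} (hk : pairClass p k x)
    (hl : pairClass p l x) : k = l := by
  fin_cases k <;> fin_cases l <;> simp [pairClass] at hk hl ⊢ <;> omega

open Classical in
lemma card_not_adj_first_le_card_pairClass_one {E : ℕ → ℕ → Prop} {p : ℕ} :
    #{j ∈ Icc 1 (p - 1) | ¬ E 0 (2 * j)} ≤ #{x ∈ nonAdjPairs E (2 * p) | pairClass p 1 x} :=
  card_le_card_of_injOn (fun j => (0, 2 * j)) (fun j hj => by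
    obtain ⟨hj, hE⟩ := mem_filter.1 (mem_coe.1 hj)
    rw [mem_Icc] at hj
    exact mem_filter.2 ⟨by simp [hE]; omega, by simp [pairClass]⟩)
    (fun a _ b _ h => by simp at h; omega)

open Classical in
lemma card_not_adj_last_le_card_pairClass_two {E : ℕ → ℕ → Prop} {p : ℕ} :
    #{j ∈ Icc 1 (p - 1) | ¬ E (2 * j - 1) (2 * p - 1)} ≤
      #{x ∈ nonAdjPairs E (2 * p) | pairClass p 2 x} :=
  card_le_card_of_injOn (fun j => (2 * j - 1, 2 * p - 1)) (fun j hj => by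
    obtain ⟨hj, hE⟩ := mem_filter.1 (mem_coe.1 hj)
    rw [mem_Icc] at hj
    exact mem_filter.2 ⟨by simp [hE]; omega, by simp [pairClass]; omega⟩)
    (fun a ha b hb h => by simp at ha hb h; omega)

open Classical in
lemma sub_one_le_card_pairClass_three {E : ℕ → ℕ → Prop} {p k : ℕ}
    (h : ∀ j, 1 ≤ j → j < k → E (2 * j) (2 * p - 1) → ¬ E (2 * j - 1) (2 * k - 1)) (hkp : k < p) :
    k - 1 ≤ #{x ∈ nonAdjPairs E (2 * p) | pairClass p 3 x} := by
  have := card_le_card_of_forall_mem_or (s := Icc 1 (k - 1))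
    (t := {x ∈ nonAdjPairs E (2 * p) | pairClass p 3 x})
    (f := fun j => (2 * j - 1, 2 * k - 1)) (g := fun j => (2 * j, 2 * p - 1))
    (fun a ha b hb h => by simp at ha hb h; omega) (fun a ha b hb h => by simp at h; omega)
    (fun a ha b hb => by simp; omega) fun j hj => by
      rw [mem_Icc] at hj
      by_cases hE : E (2 * j) (2 * p - 1)
      · exact .inl <| mem_filter.2
          ⟨by simp [h j (by omega) (by omega) hE]; omega, by simp [pairClass]; omega⟩
      · exact .inr <| mem_filter.2 ⟨by simp [hE]; omega, by simp [pairClass]; omega⟩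
  simpa using this

open Classical in
lemma sub_le_card_pairClass_four {E : ℕ → ℕ → Prop} {p l : ℕ}
    (h : ∀ j, l < j → j < p → E 0 (2 * j - 1) → ¬ E (2 * l) (2 * j)) (hl : 1 ≤ l) :
    p - 1 - l ≤ #{x ∈ nonAdjPairs E (2 * p) | pairClass p 4 x} := by
  have := card_le_card_of_forall_mem_or (s := Icc (l + 1) (p - 1))
    (t := {x ∈ nonAdjPairs E (2 * p) | pairClass p 4 x})
    (f := fun j => (2 * l, 2 * j)) (g := fun j => (0, 2 * j - 1))
    (fun a ha b hb h => by simp at h; omega) (fun a ha b hb h => by simp at ha hb h; omega)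
    (fun a ha b hb => by simp; omega) fun j hj => by
      rw [mem_Icc] at hj
      by_cases hE : E 0 (2 * j - 1)
      · exact .inl <| mem_filter.2
          ⟨by simp [h j (by omega) (by omega) hE]; omega, by simp [pairClass]; omega⟩
      · exact .inr <| mem_filter.2 ⟨by simp [hE]; omega, by simp [pairClass]; omega⟩
  simpa using this

theorem two_mul_sub_two_le_card_nonAdjPairs (E : ℕ → ℕ → Prop) {p : ℕ} (hp : 1 ≤ p)
    (h₁ : ¬ E 0 (2 * p - 1))
    (h₂ : ∀ j, 1 ≤ j → j < p → E 0 (2 * j) → ¬ E (2 * j - 1) (2 * p - 1))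
    (h₃ : ∀ j k, 1 ≤ j → j < k → k < p → E 0 (2 * j) → E (2 * k - 1) (2 * p - 1) →
      ¬ E (2 * j - 1) (2 * k))
    (h₄ : ∀ j k, 1 ≤ j → j < k → k < p → E 0 (2 * k) → E (2 * j) (2 * p - 1) →
      ¬ E (2 * j - 1) (2 * k - 1))
    (h₅ : ∀ l j, 1 ≤ l → l < j → j < p → E (2 * l - 1) (2 * p - 1) → E 0 (2 * j - 1) →
      ¬ E (2 * l) (2 * j)) :
    2 * p - 2 ≤ #(nonAdjPairs E (2 * p)) := by
  classical
  set S := {j ∈ Icc 1 (p - 1) | E 0 (2 * j)}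
  set T := {j ∈ Icc 1 (p - 1) | E (2 * j - 1) (2 * p - 1)}
  have hsum := sum_card_filter_le_card (nonAdjPairs E (2 * p)) (fun k x => pairClass p k x)
    fun x k l => eq_of_pairClass hp
  simp only [Fin.sum_univ_six] at hsum
  have hclass₀ : 1 ≤ #{x ∈ nonAdjPairs E (2 * p) | pairClass p 0 x} :=
    card_pos.2 ⟨(0, 2 * p - 1), mem_filter.2 ⟨by simp [h₁]; omega, by simp [pairClass]⟩⟩
  have hclass₁ := card_not_adj_first_le_card_pairClass_one (E := E) (p := p)
  have hclass₂ := card_not_adj_last_le_card_pairClass_two (E := E) (p := p)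
  have hS' : ∀ k ∈ S, 1 ≤ k ∧ k < p ∧ E 0 (2 * k) := fun k hk => by
    obtain ⟨hk, hE⟩ := mem_filter.1 hk
    rw [mem_Icc] at hk
    exact ⟨hk.1, by omega, hE⟩
  have hT' : ∀ l ∈ T, 1 ≤ l ∧ l < p ∧ E (2 * l - 1) (2 * p - 1) := fun l hl => by
    obtain ⟨hl, hE⟩ := mem_filter.1 hl
    rw [mem_Icc] at hl
    exact ⟨hl.1, by omega, hE⟩
  have hclass₃ : ∀ k ∈ S, k - 1 ≤ #{x ∈ nonAdjPairs E (2 * p) | pairClass p 3 x} := fun k hk =>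
    have ⟨_, hkp, hE⟩ := hS' k hk
    sub_one_le_card_pairClass_three (fun j hj hjk => h₄ j k hj hjk hkp hE) hkp
  have hclass₄ : ∀ l ∈ T, p - 1 - l ≤ #{x ∈ nonAdjPairs E (2 * p) | pairClass p 4 x} := fun l hl =>
    have ⟨hl₀, _, hE⟩ := hT' l hl
    sub_le_card_pairClass_four (fun j hlj hjp => h₅ l j hl₀ hlj hjp hE) hl₀
  have hclass₅ : ∀ j ∈ S, ∀ k ∈ T, j < k → 1 ≤ #{x ∈ nonAdjPairs E (2 * p) | pairClass p 5 x} :=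
    fun j hj k hk hjk => by
      obtain ⟨hj₀, -, hEj⟩ := hS' j hj
      obtain ⟨-, hkp, hEk⟩ := hT' k hk
      exact card_pos.2 ⟨(2 * j - 1, 2 * k), mem_filter.2
        ⟨by simp [h₃ j k hj₀ hjk hkp hEj hEk]; omega, by simp [pairClass]; omega⟩⟩
  have hST : Disjoint S T := disjoint_left.2 fun j hjS hjT =>
    have ⟨hj₀, hjp, hE⟩ := hS' j hjS
    h₂ j hj₀ hjp hE (hT' j hjT).2.2
  have := card_add_card_le_of_forall_le (fun j hj => (hS' j hj).1)
    (fun l hl => ⟨(hT' l hl).1, (hT' l hl).2.1⟩) hST hclass₃ hclass₄ hclass₅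
  have hS : #S + #{j ∈ Icc 1 (p - 1) | ¬ E 0 (2 * j)} = p - 1 := by
    rw [card_filter_add_card_filter_not, Nat.card_Icc]; omega
  have hT : #T + #{j ∈ Icc 1 (p - 1) | ¬ E (2 * j - 1) (2 * p - 1)} = p - 1 := by
    rw [card_filter_add_card_filter_not, Nat.card_Icc]; omega
  omega

lemma card_nonAdjPairs_le_ncard_compl_edgeSet {V : Type*} [Finite V] (H : SimpleGraph V)
    {w : ℕ → V} {n : ℕ} (hw : Set.InjOn w (Set.Iio n)) :
    #(nonAdjPairs (fun a b => H.Adj (w a) (w b)) n) ≤ Hᶜ.edgeSet.ncard := by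
  rw [← Set.ncard_coe_finset, ← Set.InjOn.ncard_image (f := fun x => s(w x.1, w x.2))]
  · refine Set.ncard_le_ncard ?_ (Set.toFinite _)
    rintro _ ⟨x, hx, rfl⟩
    obtain ⟨h₁, h₂, h₃⟩ := mem_nonAdjPairs.1 hx
    exact ⟨fun h => h₁.ne (hw (by simp; omega) h₂ h), h₃⟩
  · intro x hx y hy hxy
    obtain ⟨hx₁, hx₂, -⟩ := mem_nonAdjPairs.1 hx
    obtain ⟨hy₁, hy₂, -⟩ := mem_nonAdjPairs.1 hy
    have hx₀ : x.1 ∈ Set.Iio n := Set.mem_Iio.2 (by omega)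
    have hy₀ : y.1 ∈ Set.Iio n := Set.mem_Iio.2 (by omega)
    rcases Sym2.eq_iff.1 hxy with ⟨h₁, h₂⟩ | ⟨h₁, h₂⟩
    · exact Prod.ext (hw hx₀ hy₀ h₁) (hw hx₂ hy₂ h₂)
    · have := hw hx₀ hy₂ h₁
      have := hw hx₂ hy₀ h₂
      omega

theorem IsRedAltPath.two_mul_sub_two_le_ncard_compl_edgeSet {V : Type*} [Finite V] {c q : ℕ}
    {G : Fin c → SimpleGraph V} {red i : Fin c} {w : ℕ → V} {μ : ℕ → Fin c}
    (h : IsRedAltPath G red q w μ) (hq : 2 ≤ q) (hi : i ≠ red)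
    (hno : ¬ HasProperCycleOn G (w '' Set.Iio (2 * q))) :
    2 * q - 2 ≤ ((G i)ᶜ).edgeSet.ncard :=
  (two_mul_sub_two_le_card_nonAdjPairs (fun a b => (G i).Adj (w a) (w b)) (by omega)
    (h.not_adj_first_last hq hi hno)
    (fun _ _ hj => h.not_adj_last_of_adj_first hq hi hno hj)
    (fun _ _ _ hjk hk => h.not_adj_odd_even hq hi hno hjk hk)
    (fun _ _ hj hjk hk => h.not_adj_odd_odd hq hi hno (by omega) hjk hk)
    (fun _ _ hl hlj hj => h.not_adj_even_even hq hi hno (by omega) hlj hj)).trans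
  (card_nonAdjPairs_le_ncard_compl_edgeSet _ h.1.1)

theorem stmt3_general {V : Type*} [Fintype V] {c p : ℕ} (G : Fin c → SimpleGraph V)
    (red : Fin c)
    (v : ℕ → V) (κ : ℕ → Fin c)
    (hpath : IsProperPathOn G (2 * p) v κ)
    (hred : ∀ j < p, κ (2 * j) = red)
    (hnocycle : ¬ HasProperCycleOn G (v '' Set.Iio (2 * p))) :
    (∀ i : Fin c, i ≠ red → 2 * p - 2 ≤ ((G i)ᶜ).edgeSet.ncard) ∧
    (c - 1) * (2 * p - 2) ≤ ∑ i ∈ Finset.univ.erase red, ((G i)ᶜ).edgeSet.ncard := by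
  have key : ∀ i : Fin c, i ≠ red → 2 * p - 2 ≤ ((G i)ᶜ).edgeSet.ncard := fun i hi => by
    rcases lt_or_ge p 2 with hp | hp
    · omega
    · exact IsRedAltPath.two_mul_sub_two_le_ncard_compl_edgeSet ⟨hpath, hred⟩ hp hi hnocycle
  refine ⟨key, ?_⟩
  calc (c - 1) * (2 * p - 2) = #(univ.erase red) • (2 * p - 2) := by
        rw [card_erase_of_mem (mem_univ _), card_univ, Fintype.card_fin, smul_eq_mul]
    _ ≤ ∑ i ∈ univ.erase red, ((G i)ᶜ).edgeSet.ncard :=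
        card_nsmul_le_sum _ _ _ fun i hi => key i (ne_of_mem_erase hi)

/-- If a connected `c`-edge-coloured multigraph (`c ≥ 2`) contains a proper
path `x_1 y_1 x_2 y_2 … x_p y_p` (`p ≥ 3`) whose edges `x_i y_i` are all red, and contains no
proper cycle `C` with `V(C) = V(P)`, then for each colour `i ≠ red` there are at least
`2p - 2` missing edges of colour `i`; hence in total at least `(c-1)(2p-2)` missing edges in
colours different from red. -/
theorem stmt3 {V : Type*} [Fintype V] {c p : ℕ} (G : Fin c → SimpleGraph V)
    (red : Fin c) (hc : 2 ≤ c)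
    (hconn : (⨆ i, G i).Connected) (hp : 3 ≤ p)
    (v : ℕ → V) (κ : ℕ → Fin c)
    (hpath : IsProperPathOn G (2 * p) v κ)
    (hred : ∀ j < p, κ (2 * j) = red)
    (hnocycle : ¬ HasProperCycleOn G (v '' Set.Iio (2 * p))) :
    (∀ i : Fin c, i ≠ red → 2 * p - 2 ≤ ((G i)ᶜ).edgeSet.ncard) ∧
    (c - 1) * (2 * p - 2) ≤ ∑ i ∈ Finset.univ.erase red, ((G i)ᶜ).edgeSet.ncard :=
  stmt3_general G red v κ hpath hred hnocycle
end

section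
/- Let ℓ be a positive integer and let G be a connected c-edge-coloured multigraph on n vertices with at least c·ℓ + 1 edges, where c ≥ 4. Then there exist colours j and l with j ≠ l such that the (c−1)-edge-coloured multigraph G' obtained from G by recolouring every edge of colour j with colour l and deleting resulting parallel edges of the same colour (i.e., replacing G^l by the union of G^j and G^l and removing colour j) satisfies: G' is connected; G' has at least (c−1)·ℓ + 1 edges; if G' has a proper Hamiltonian path then so does G; and if rd(G) = c then rd(G') = c−1. -/
/-! The proof merges a colour class `j` of minimum size into an arbitrary other class `l`.
Merging keeps the underlying simple graph, hence connectivity; it loses at most the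
`|G j| ≤ |E(G)| / c` edges of colour `j`; a proper path of the merged multigraph becomes
proper in `G` by giving back colour `j` to the edges of colour `l` that are not in `G l`; and
when every vertex sees all `c` colours it sees exactly the `c - 1` surviving ones afterwards. -/

section Recolour

open SimpleGraph

variable {V : Type*} {c : ℕ}

def recolour (G : Fin c → SimpleGraph V) (j l : Fin c) : Fin c → SimpleGraph V :=
  Function.update (Function.update G j ⊥) l (G j ⊔ G l)

variable (G : Fin c → SimpleGraph V) {j l : Fin c}

@[simp]
lemma recolour_target : recolour G j l l = G j ⊔ G l := by
  simp [recolour]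

@[simp]
lemma recolour_source (hjl : j ≠ l) : recolour G j l j = ⊥ := by
  simp [recolour, hjl]

lemma recolour_of_ne {i : Fin c} (hij : i ≠ j) (hil : i ≠ l) : recolour G j l i = G i := by
  simp [recolour, hij, hil]

lemma le_recolour_of_ne {i : Fin c} (hij : i ≠ j) : G i ≤ recolour G j l i := by
  by_cases hil : i = l
  · subst hil
    simp
  · rw [recolour_of_ne G hij hil]

lemma iSup_recolour (hjl : j ≠ l) : ⨆ i, recolour G j l i = ⨆ i, G i := by
  apply le_antisymm <;> refine iSup_le fun i => ?_
  · by_cases hij : i = j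
    · simp [hij, recolour_source G hjl]
    by_cases hil : i = l
    · simpa [hil] using sup_le (le_iSup G j) (le_iSup G l)
    · exact (recolour_of_ne G hij hil).le.trans (le_iSup G i)
  · by_cases hij : i = j
    · subst hij
      exact le_sup_left.trans ((recolour_target G).ge.trans (le_iSup _ l))
    · exact (le_recolour_of_ne G hij).trans (le_iSup _ i)

lemma numEdges_le_add_numEdges_recolour [Finite V] :
    numEdges G ≤ (G j).edgeSet.ncard + numEdges (recolour G j l) := by
  classical
  rw [numEdges, ← Finset.add_sum_erase _ _ (Finset.mem_univ j)]
  gcongr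
  refine (Finset.sum_le_sum fun i hi => ?_).trans
    (Finset.sum_le_sum_of_subset (Finset.erase_subset j _))
  exact Set.ncard_le_ncard (edgeSet_mono (le_recolour_of_ne G (Finset.ne_of_mem_erase hi)))

lemma exists_mul_ncard_edgeSet_le_numEdges [NeZero c] :
    ∃ j, c * (G j).edgeSet.ncard ≤ numEdges G := by
  obtain ⟨j, -, hj⟩ := Finset.exists_min_image Finset.univ (fun i => (G i).edgeSet.ncard)
    Finset.univ_nonempty
  refine ⟨j, ?_⟩
  calc c * (G j).edgeSet.ncard = ∑ _i : Fin c, (G j).edgeSet.ncard := by simp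
    _ ≤ numEdges G := Finset.sum_le_sum fun i _ => hj i (Finset.mem_univ i)

lemma sub_one_mul_add_one_le_numEdges_recolour [Finite V] (hc : 2 ≤ c) {ℓ : ℕ}
    (hm : c * ℓ + 1 ≤ numEdges G) (hj : c * (G j).edgeSet.ncard ≤ numEdges G) :
    (c - 1) * ℓ + 1 ≤ numEdges (recolour G j l) := by
  have hlost := numEdges_le_add_numEdges_recolour G (j := j) (l := l)
  obtain ⟨d, rfl⟩ : ∃ d, c = d + 2 := ⟨c - 2, by omega⟩
  rw [show d + 2 - 1 = d + 1 by omega]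
  -- if `|G j| > ℓ`, then `(c - 1) ℓ + 1 ≤ (c - 1) |G j|` since `c ≥ 2`
  rcases le_or_gt (G j).edgeSet.ncard ℓ with h | h <;> nlinarith

lemma IsProperPathOn.of_recolour (hjl : j ≠ l) {m : ℕ} {v : ℕ → V} {κ : ℕ → Fin c}
    (h : IsProperPathOn (recolour G j l) m v κ) : ∃ κ', IsProperPathOn G m v κ' := by
  classical
  obtain ⟨hinj, hadj, hprop⟩ := h
  have hne : ∀ i, i + 1 < m → κ i ≠ j := fun i hi hκ => by
    simpa [hκ, recolour_source G hjl] using hadj i hi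
  have hl : ∀ i, i + 1 < m → ¬ (G (κ i)).Adj (v i) (v (i + 1)) → κ i = l := by
    intro i hi hG
    by_contra hil
    exact hG (recolour_of_ne G (hne i hi) hil ▸ hadj i hi)
  refine ⟨fun i => if (G (κ i)).Adj (v i) (v (i + 1)) then κ i else j, hinj, ?_, ?_⟩
  · intro i hi
    dsimp only
    split_ifs with hG
    · exact hG
    · have hadj' := hadj i hi
      rw [hl i hi hG, recolour_target] at hadj'
      rw [hl i hi hG] at hG
      exact (sup_adj _ _ _ _).mp hadj' |>.resolve_right hG
  · intro i hi
    dsimp only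
    split_ifs with hG₁ hG₂ hG₂
    · exact hprop i hi
    · exact hne i (by omega)
    · exact (hne (i + 1) (by omega)).symm
    · exact fun _ => hprop i hi ((hl i (by omega) hG₁).trans (hl (i + 1) hi hG₂).symm)

lemma HasProperHamPath.of_recolour [Fintype V] (hjl : j ≠ l)
    (h : HasProperHamPath (recolour G j l)) : HasProperHamPath G := by
  obtain ⟨v, κ, hpath, hsurj⟩ := h
  obtain ⟨κ', hpath'⟩ := IsProperPathOn.of_recolour G hjl hpath
  exact ⟨v, κ', hpath', hsurj⟩

lemma rainbowDeg_le (x : V) : rainbowDeg G x ≤ c := by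
  unfold rainbowDeg
  simpa using Set.ncard_le_ncard (Set.subset_univ {i : Fin c | ∃ y, (G i).Adj x y})

lemma rainbowDeg_eq_iff_forall_exists_adj {x : V} :
    rainbowDeg G x = c ↔ ∀ i, ∃ y, (G i).Adj x y := by
  unfold rainbowDeg
  constructor
  · intro h
    have hu : {i : Fin c | ∃ y, (G i).Adj x y} = Set.univ :=
      Set.eq_of_subset_of_ncard_le (Set.subset_univ _) (by simp [h])
    exact fun i => Set.eq_univ_iff_forall.mp hu i
  · intro h
    have hu : {i : Fin c | ∃ y, (G i).Adj x y} = Set.univ := Set.eq_univ_of_forall h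
    rw [hu, Set.ncard_univ, Nat.card_eq_fintype_card, Fintype.card_fin]

lemma rainbowDeg_eq_of_minRainbowDeg_eq (h : minRainbowDeg G = c) (x : V) :
    rainbowDeg G x = c :=
  (rainbowDeg_le G x).antisymm (h.symm.trans_le (Nat.sInf_le (Set.mem_range_self x)))

lemma minRainbowDeg_eq_of_forall_rainbowDeg_eq [Nonempty V] {k : ℕ}
    (h : ∀ x, rainbowDeg G x = k) :
    minRainbowDeg G = k := by
  rw [minRainbowDeg, Set.range_eq_singleton_iff.mpr h, csInf_singleton]

lemma rainbowDeg_recolour_of_rainbowDeg_eq (hjl : j ≠ l) {x : V} (h : rainbowDeg G x = c) :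
    rainbowDeg (recolour G j l) x = c - 1 := by
  rw [rainbowDeg_eq_iff_forall_exists_adj] at h
  have hcolours : {i | ∃ y, (recolour G j l i).Adj x y} = {j}ᶜ := by
    ext i
    refine ⟨?_, fun hij => ?_⟩
    · rintro ⟨y, hy⟩ rfl
      simp [recolour_source G hjl] at hy
    · obtain ⟨y, hy⟩ := h i
      exact ⟨y, le_recolour_of_ne G hij hy⟩
  rw [rainbowDeg, hcolours, Set.ncard_compl, Set.ncard_singleton, Nat.card_eq_fintype_card,
    Fintype.card_fin]

end Recolour

theorem stmt9_general {V : Type*} [Fintype V] {c ℓ : ℕ} (G : Fin c → SimpleGraph V)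
    (hc : 4 ≤ c)
    (hconn : (⨆ i, G i).Connected)
    (hm : c * ℓ + 1 ≤ numEdges G) :
    ∃ j l : Fin c, j ≠ l ∧
      ∀ G' : Fin c → SimpleGraph V,
        G' = Function.update (Function.update G j ⊥) l (G j ⊔ G l) →
        (⨆ i, G' i).Connected ∧
        (c - 1) * ℓ + 1 ≤ numEdges G' ∧
        (HasProperHamPath G' → HasProperHamPath G) ∧
        (minRainbowDeg G = c → minRainbowDeg G' = c - 1) := by
  have : NeZero c := ⟨by omega⟩
  have : Nontrivial (Fin c) := Fin.nontrivial_iff_two_le.mpr (by omega)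
  have : Nonempty V := hconn.nonempty
  obtain ⟨j, hj⟩ := exists_mul_ncard_edgeSet_le_numEdges G
  obtain ⟨l, hlj⟩ := exists_ne j
  refine ⟨j, l, hlj.symm, ?_⟩
  rintro _ rfl
  refine ⟨iSup_recolour G hlj.symm ▸ hconn,
    sub_one_mul_add_one_le_numEdges_recolour G (by omega) hm hj,
    HasProperHamPath.of_recolour G hlj.symm, fun hrd => ?_⟩
  exact minRainbowDeg_eq_of_forall_rainbowDeg_eq _ fun x =>
    rainbowDeg_recolour_of_rainbowDeg_eq G hlj.symm
      (rainbowDeg_eq_of_minRainbowDeg_eq G hrd x)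

/-- If `G` is a connected `c`-edge-coloured multigraph (`c ≥ 4`) with at
least `c·ℓ + 1` edges, then there are colours `j ≠ l` such that the multigraph `G'` obtained by
recolouring every edge of colour `j` with colour `l` (deleting resulting parallel edges of the
same colour, i.e. replacing the colour class `l` by `G j ⊔ G l` and emptying colour class `j`)
is connected, has at least `(c-1)·ℓ + 1` edges, a proper Hamiltonian path of `G'` yields one of
`G`, and if `rd(G) = c` then `rd(G') = c - 1`. -/
theorem stmt9 {V : Type*} [Fintype V] {c ℓ : ℕ} (G : Fin c → SimpleGraph V)
    (hℓ : 1 ≤ ℓ) (hc : 4 ≤ c)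
    (hconn : (⨆ i, G i).Connected)
    (hm : c * ℓ + 1 ≤ numEdges G) :
    ∃ j l : Fin c, j ≠ l ∧
      ∀ G' : Fin c → SimpleGraph V,
        G' = Function.update (Function.update G j ⊥) l (G j ⊔ G l) →
        (⨆ i, G' i).Connected ∧
        (c - 1) * ℓ + 1 ≤ numEdges G' ∧
        (HasProperHamPath G' → HasProperHamPath G) ∧
        (minRainbowDeg G = c → minRainbowDeg G' = c - 1) :=
  stmt9_general G hc hconn hm
end

section
/- For every odd n ≥ 9, the following 2-edge-coloured multigraph on n vertices, with colours red and blue, has exactly (n choose 2) + (n-2 choose 2) edges and has no proper Hamiltonian path: take a rainbow complete 2-edge-coloured multigraph on n−2 vertices (every pair of its vertices joined by both a red and a blue edge), add two new vertices x_1 and x_2, add a red edge x_1x_2, and add a red edge from each of x_1, x_2 to each of the n−2 original vertices. -/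
open SimpleGraph

theorem Fin.two_eq_iff_ne_of_ne {a b : Fin 2} (h : a ≠ b) (c : Fin 2) : a = c ↔ b ≠ c := by
  omega

namespace IsProperPathOn

variable {V : Type*} {m : ℕ} {v : ℕ → V}

theorem color_eq_of_monochromatic {c : ℕ} {G : Fin c → SimpleGraph V} {κ : ℕ → Fin c}
    (h : IsProperPathOn G m v κ) {x : V} {r : Fin c} (hx : ∀ k y, (G k).Adj x y → k = r)
    {i : ℕ} (hi : i + 1 < m) (hxi : v i = x ∨ v (i + 1) = x) : κ i = r := by
  rcases hxi with rfl | rfl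
  · exact hx _ _ (h.2.1 i hi)
  · exact hx _ _ (h.2.1 i hi).symm

theorem eq_zero_or_eq_sub_one_of_monochromatic {c : ℕ} {G : Fin c → SimpleGraph V}
    {κ : ℕ → Fin c}
    (h : IsProperPathOn G m v κ) {x : V} {r : Fin c} (hx : ∀ k y, (G k).Adj x y → k = r)
    {i : ℕ} (hi : i < m) (hxi : v i = x) : i = 0 ∨ i = m - 1 := by
  by_contra! ⟨hi0, hilast⟩
  obtain ⟨j, rfl⟩ := Nat.exists_eq_succ_of_ne_zero hi0
  have hin : κ j = r := h.color_eq_of_monochromatic hx (by omega) (Or.inr hxi)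
  have hout : κ (j + 1) = r := h.color_eq_of_monochromatic hx (by omega) (Or.inl hxi)
  exact h.2.2 j (by omega) (hin.trans hout.symm)

theorem color_eq_color_zero_iff_even {G : Fin 2 → SimpleGraph V} {κ : ℕ → Fin 2}
    (h : IsProperPathOn G m v κ) : ∀ i, i + 1 < m → (κ i = κ 0 ↔ Even i)
  | 0, _ => by simp
  | i + 1, hi => by
    rw [Nat.even_add_one, ← h.color_eq_color_zero_iff_even i (by omega),
      Fin.two_eq_iff_ne_of_ne (h.2.2 i (by omega)).symm]

end IsProperPathOn

theorem not_hasProperHamPath_of_monochromatic {V : Type*} [Fintype V]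
    {G : Fin 2 → SimpleGraph V}
    (hodd : Odd (Fintype.card V)) {x₁ x₂ : V} (hne : x₁ ≠ x₂) {r : Fin 2}
    (h₁ : ∀ k y, (G k).Adj x₁ y → k = r) (h₂ : ∀ k y, (G k).Adj x₂ y → k = r) :
    ¬ HasProperHamPath G := by
  rintro ⟨v, κ, hp, hsurj⟩
  set m := Fintype.card V
  obtain ⟨i₁, hi₁, rfl⟩ := hsurj x₁
  obtain ⟨i₂, hi₂, rfl⟩ := hsurj x₂
  have hi : i₁ ≠ i₂ := fun h => hne (congrArg v h)
  have hm : 3 ≤ m := by obtain ⟨k, hk⟩ := hodd; omega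
  have hlast : m - 2 + 1 = m - 1 := by omega
  have hends : (i₁ = 0 ∧ i₂ = m - 1) ∨ (i₁ = m - 1 ∧ i₂ = 0) := by
    have := hp.eq_zero_or_eq_sub_one_of_monochromatic h₁ hi₁ rfl
    have := hp.eq_zero_or_eq_sub_one_of_monochromatic h₂ hi₂ rfl
    omega
  have hfirst_red : κ 0 = r := by
    rcases hends with ⟨rfl, -⟩ | ⟨-, rfl⟩
    · exact hp.color_eq_of_monochromatic h₁ (by omega) (Or.inl rfl)
    · exact hp.color_eq_of_monochromatic h₂ (by omega) (Or.inl rfl)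
  have hlast_red : κ (m - 2) = r := by
    rcases hends with ⟨-, rfl⟩ | ⟨rfl, -⟩
    · exact hp.color_eq_of_monochromatic h₂ (i := m - 2) (by omega) (Or.inr (by rw [hlast]))
    · exact hp.color_eq_of_monochromatic h₁ (i := m - 2) (by omega) (Or.inr (by rw [hlast]))
  have hm_sub_two : ¬ Even (m - 2) :=
    Nat.not_even_iff_odd.2 (Nat.Odd.sub_even (by omega) hodd even_two)
  exact hm_sub_two
    ((hp.color_eq_color_zero_iff_even _ (by omega)).1 (hlast_red.trans hfirst_red.symm))

theorem SimpleGraph.ncard_edgeSet_top (V : Type*) [Fintype V] :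
    (⊤ : SimpleGraph V).edgeSet.ncard = (Fintype.card V).choose 2 := by
  classical
  rw [← card_edgeFinset_top_eq_card_choose_two, ← coe_edgeFinset, Set.ncard_coe_finset]

theorem SimpleGraph.fromRel_and_eq_map_top {V : Type*} (p : V → Prop) :
    fromRel (fun u v => p u ∧ p v) =
      (⊤ : SimpleGraph (Subtype p)).map (Function.Embedding.subtype p) := by
  ext u v
  simp only [fromRel_adj, map_adj, top_adj, Function.Embedding.subtype_apply]
  constructor
  · rintro ⟨hne, ⟨hu, hv⟩ | ⟨hv, hu⟩⟩ <;>
      exact ⟨⟨u, hu⟩, ⟨v, hv⟩, fun h => hne (congrArg Subtype.val h), rfl, rfl⟩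
  · rintro ⟨a, b, hab, rfl, rfl⟩
    exact ⟨fun h => hab (Subtype.ext h), Or.inl ⟨a.2, b.2⟩⟩

theorem SimpleGraph.ncard_edgeSet_fromRel_and {V : Type*} (p : V → Prop)
    [Fintype (Subtype p)] :
    (fromRel (fun u v => p u ∧ p v)).edgeSet.ncard = (Fintype.card (Subtype p)).choose 2 := by
  rw [fromRel_and_eq_map_top, edgeSet_map,
    Set.ncard_image_of_injective _ (Function.Embedding.sym2Map _).injective, ncard_edgeSet_top]

theorem Fin.card_subtype_le_val (n k : ℕ) :
    Fintype.card {u : Fin n // k ≤ (u : ℕ)} = n - k := by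
  rw [Fintype.card_subtype]
  simp only [← not_lt, Finset.filter_not, Finset.card_univ_sdiff, Fintype.card_fin,
    Fin.card_filter_val_lt]
  omega

/-- For every odd `n ≥ 9`, the 2-edge-coloured multigraph on `Fin n`
(colour `0` = red, colour `1` = blue) obtained from a rainbow complete 2-edge-coloured
multigraph on the `n - 2` vertices `{2, …, n-1}` by adding the two vertices `0 = x₁` and
`1 = x₂`, a red edge `x₁x₂`, and red edges from `x₁` and `x₂` to all other vertices
(so red is complete, blue is complete on `{2, …, n-1}`) has exactly
`(n choose 2) + (n-2 choose 2)` edges and no proper Hamiltonian path. -/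
theorem stmt15 {n : ℕ} (h9 : 9 ≤ n) (hodd : Odd n) :
    ∀ G : Fin 2 → SimpleGraph (Fin n),
      G = ![⊤, SimpleGraph.fromRel (fun (u v : Fin n) => 2 ≤ (u : ℕ) ∧ 2 ≤ (v : ℕ))] →
      numEdges G = n.choose 2 + (n - 2).choose 2 ∧ ¬ HasProperHamPath G := by
  rintro G rfl
  refine ⟨?_, ?_⟩
  · rw [numEdges, Fin.sum_univ_two]
    simp only [Matrix.cons_val_zero, Matrix.cons_val_one, Matrix.cons_val_fin_one]
    rw [ncard_edgeSet_top, Fintype.card_fin,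
      ncard_edgeSet_fromRel_and (fun u : Fin n => 2 ≤ (u : ℕ)), Fin.card_subtype_le_val]
  · have hred : ∀ x : Fin n, (x : ℕ) < 2 → ∀ k y,
        (![⊤, fromRel (fun (u v : Fin n) => 2 ≤ (u : ℕ) ∧ 2 ≤ (v : ℕ))] k).Adj x y →
          k = 0 := by
      intro x hx k y hk
      fin_cases k
      · rfl
      · simp only [Fin.mk_one, Matrix.cons_val_one, Matrix.cons_val_fin_one, fromRel_adj] at hk
        omega
    exact not_hasProperHamPath_of_monochromatic (by rwa [Fintype.card_fin])
      (x₁ := ⟨0, by omega⟩) (x₂ := ⟨1, by omega⟩) (by simp)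
      (hred _ (by simp)) (hred _ (by simp))
end

section
/- For every odd n ≥ 15, the following 2-edge-coloured multigraph on n vertices, with colours red and blue, has exactly (n choose 2) + (n-3 choose 2) + 3 edges, satisfies rd(G) = 2, and has no proper Hamiltonian path: take a set A of n−3 vertices with a blue edge between every pair of vertices of A, fix a vertex v in A, add three new vertices v_1, v_2, v_3 each joined to v by a blue edge, and finally add a red edge between every pair of the n vertices. -/
/-!
In a proper path whose edges use only two colours the colours alternate. On an odd number of
vertices the path has an even number of edges, so its first and last edges differ in colour and
every vertex except possibly one end of the path meets a blue path edge. Each of `v₁, v₂, v₃`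
has `v` as its only blue neighbour, so two of them would be joined to `v` by blue path edges,
whereas the two path edges at `v` have different colours.
-/

namespace IsProperPathOn

variable {V : Type*} {G : Fin 2 → SimpleGraph V} {m : ℕ} {v : ℕ → V} {κ : ℕ → Fin 2}

theorem colour_eq_colour_mod_two (h : IsProperPathOn G m v κ) :
    ∀ i, i + 1 < m → κ i = κ (i % 2)
  | 0, _ => rfl
  | 1, _ => rfl
  | i + 2, hi => by
    have hne₁ := h.2.2 i (by omega)
    have hne₂ := h.2.2 (i + 1) (by omega)
    rw [Nat.add_mod_right, ← h.colour_eq_colour_mod_two i (by omega)]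
    revert hne₁ hne₂
    generalize κ i = a, κ (i + 1) = b, κ (i + 1 + 1) = c
    revert a b c
    decide

theorem exists_forall_ne_exists_colour_eq (h : IsProperPathOn G m v κ) (hm : Odd m)
    (b : Fin 2) : ∃ bad, ∀ p < m, p ≠ bad →
      ∃ e, e + 1 < m ∧ κ e = b ∧ (p = e ∨ p = e + 1) := by
  obtain ⟨k, rfl⟩ := hm
  rcases k.eq_zero_or_pos with rfl | hk
  · exact ⟨0, fun p hp hp0 => absurd hp (by omega)⟩
  have h01 : κ 0 ≠ κ 1 := h.2.2 0 (by omega)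
  obtain h0 | h1 : κ 0 = b ∨ κ 1 = b := by
    revert h01
    generalize κ 0 = x, κ 1 = y
    revert x y b
    decide
  · refine ⟨2 * k, fun p hp hpk => ⟨p - p % 2, by omega, ?_, by omega⟩⟩
    rw [h.colour_eq_colour_mod_two _ (by omega), ← h0]
    congr 1
    omega
  · refine ⟨0, fun p hp hp0 => ⟨p - 1 + p % 2, by omega, ?_, by omega⟩⟩
    rw [h.colour_eq_colour_mod_two _ (by omega), ← h1]
    congr 1
    omega

theorem eq_of_colour_eq (h : IsProperPathOn G m v κ) {e e' q : ℕ} (he : e + 1 < m)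
    (he' : e' + 1 < m) (hκ : κ e = κ e') (hq : q = e ∨ q = e + 1)
    (hq' : q = e' ∨ q = e' + 1) : e = e' := by
  by_contra hne
  obtain rfl | rfl : e' = e + 1 ∨ e = e' + 1 := by omega
  · exact h.2.2 e (by omega) hκ
  · exact h.2.2 e' (by omega) hκ.symm

theorem card_le_two_of_forall_adj_eq (h : IsProperPathOn G m v κ) (hm : Odd m) {b : Fin 2}
    {w : V} {S : Finset V} (hSw : ∀ x ∈ S, ∀ y, (G b).Adj x y → y = w)
    (hSv : ∀ x ∈ S, ∃ i < m, v i = x) : S.card ≤ 2 := by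
  obtain ⟨bad, hbad⟩ := h.exists_forall_ne_exists_colour_eq hm b
  have hto_w : ∀ p < m, p ≠ bad → v p ∈ S →
      ∃ e q, e + 1 < m ∧ κ e = b ∧ (p = e ∧ q = e + 1 ∨ p = e + 1 ∧ q = e) ∧ v q = w := by
    intro p hp hpbad hpS
    obtain ⟨e, he, hκ, hpe⟩ := hbad p hp hpbad
    have hadj := h.2.1 e he
    rw [hκ] at hadj
    rcases hpe with rfl | rfl
    · exact ⟨p, p + 1, he, hκ, Or.inl ⟨rfl, rfl⟩, hSw _ hpS _ hadj⟩
    · exact ⟨e, e, he, hκ, Or.inr ⟨rfl, rfl⟩, hSw _ hpS _ hadj.symm⟩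
  have hunique : ∀ p < m, ∀ p' < m, p ≠ bad → p' ≠ bad → v p ∈ S → v p' ∈ S → p = p' := by
    intro p hp p' hp' hpbad hpbad' hpS hpS'
    obtain ⟨e, q, he, hκ, hpq, hq⟩ := hto_w p hp hpbad hpS
    obtain ⟨e', q', he', hκ', hpq', hq'⟩ := hto_w p' hp' hpbad' hpS'
    have hqq : q = q' :=
      h.1 (Set.mem_Iio.mpr (by omega)) (Set.mem_Iio.mpr (by omega)) (hq.trans hq'.symm)
    have hee : e = e' := h.eq_of_colour_eq he he' (hκ.trans hκ'.symm) (q := q) (by omega)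
      (by omega)
    omega
  classical
  set P := (Finset.range m).filter fun p => v p ∈ S
  have hSP : S ⊆ P.image v := fun x hx => by
    obtain ⟨i, hi, rfl⟩ := hSv x hx
    exact Finset.mem_image_of_mem v (Finset.mem_filter.mpr ⟨Finset.mem_range.mpr hi, hx⟩)
  have hP : (P.erase bad).card ≤ 1 := Finset.card_le_one.mpr fun p hp p' hp' => by
    simp only [P, Finset.mem_erase, Finset.mem_filter, Finset.mem_range] at hp hp'
    exact hunique p hp.2.1 p' hp'.2.1 hp.1 hp'.1 hp.2.2 hp'.2.2
  have hPcard := Finset.pred_card_le_card_erase (s := P) (a := bad)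
  calc S.card ≤ (P.image v).card := Finset.card_le_card hSP
    _ ≤ P.card := Finset.card_image_le
    _ ≤ 2 := by omega

end IsProperPathOn

theorem not_hasProperHamPath_of_forall_adj_eq {V : Type*} [Fintype V]
    {G : Fin 2 → SimpleGraph V} (hV : Odd (Fintype.card V)) {b : Fin 2} {w : V} {S : Finset V}
    (hS : 2 < S.card) (hSw : ∀ x ∈ S, ∀ y, (G b).Adj x y → y = w) : ¬ HasProperHamPath G :=
  fun ⟨_, _, hpath, hv⟩ => (hpath.card_le_two_of_forall_adj_eq hV hSw fun x _ => hv x).not_gt hS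

namespace SimpleGraph

variable {V : Type*}

theorem ncard_edgeSet_top_s16 [Fintype V] :
    (⊤ : SimpleGraph V).edgeSet.ncard = (Fintype.card V).choose 2 := by
  classical
  rw [← coe_edgeFinset, Set.ncard_coe_finset, card_edgeFinset_top_eq_card_choose_two]

theorem ncard_edgeSet_fromRel_mem_and_mem (A : Finset V) :
    (fromRel fun u v => u ∈ A ∧ v ∈ A).edgeSet.ncard = A.card.choose 2 := by
  have hmap : (fromRel fun u v => u ∈ A ∧ v ∈ A) =
      (⊤ : SimpleGraph A).map (Function.Embedding.subtype _) := by
    ext a b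
    simp only [fromRel_adj, map_adj, top_adj, Function.Embedding.subtype_apply]
    constructor
    · rintro ⟨hab, ⟨ha, hb⟩ | ⟨hb, ha⟩⟩ <;>
        exact ⟨⟨a, ha⟩, ⟨b, hb⟩, fun h => hab (congrArg Subtype.val h), rfl, rfl⟩
    · rintro ⟨a, b, hab, rfl, rfl⟩
      exact ⟨Subtype.coe_ne_coe.mpr hab, Or.inl ⟨a.2, b.2⟩⟩
  rw [hmap, edgeSet_map, Set.ncard_image_of_injective _ (Function.Embedding.sym2Map _).injective,
    ncard_edgeSet_top_s16, Fintype.card_coe]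

theorem ncard_edgeSet_fromRel_mem_and_eq (L : Finset V) {w : V} (hw : w ∉ L) :
    (fromRel fun u v => u ∈ L ∧ v = w).edgeSet.ncard = L.card := by
  have hedges : (fromRel fun u v => u ∈ L ∧ v = w).edgeSet = (fun u => s(u, w)) '' L := by
    ext e
    induction e using Sym2.ind with
    | _ a b =>
      simp only [mem_edgeSet, fromRel_adj, Set.mem_image, Finset.mem_coe, Sym2.eq_iff]
      constructor
      · rintro ⟨-, ⟨ha, rfl⟩ | ⟨hb, rfl⟩⟩
        · exact ⟨a, ha, Or.inl ⟨rfl, rfl⟩⟩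
        · exact ⟨b, hb, Or.inr ⟨rfl, rfl⟩⟩
      · rintro ⟨u, hu, ⟨rfl, rfl⟩ | ⟨rfl, rfl⟩⟩
        · exact ⟨fun h => hw (h ▸ hu), Or.inl ⟨hu, rfl⟩⟩
        · exact ⟨fun h => hw (h ▸ hu), Or.inr ⟨hu, rfl⟩⟩
  rw [hedges, Set.ncard_image_of_injective _ fun u u' h => Sym2.congr_left.mp h,
    Set.ncard_coe_finset]

theorem ncard_edgeSet_clique_sup_star [Finite V] (A L : Finset V) {w : V} (hw : w ∉ L)
    (hAL : Disjoint A L) :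
    ((fromRel fun u v => u ∈ A ∧ v ∈ A) ⊔ fromRel fun u v => u ∈ L ∧ v = w).edgeSet.ncard =
      A.card.choose 2 + L.card := by
  have hdisj : Disjoint (fromRel fun u v => u ∈ A ∧ v ∈ A).edgeSet
      (fromRel fun u v => u ∈ L ∧ v = w).edgeSet := by
    rw [Set.disjoint_left]
    intro e
    induction e using Sym2.ind with
    | _ a b =>
      simp only [mem_edgeSet, fromRel_adj]
      rintro ⟨-, ⟨ha, hb⟩ | ⟨hb, ha⟩⟩ ⟨-, ⟨ha', -⟩ | ⟨hb', -⟩⟩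
      all_goals first
        | exact Finset.disjoint_left.mp hAL ha ha'
        | exact Finset.disjoint_left.mp hAL hb hb'
  rw [edgeSet_sup, Set.ncard_union_eq hdisj, ncard_edgeSet_fromRel_mem_and_mem,
    ncard_edgeSet_fromRel_mem_and_eq L hw]

theorem eq_of_adj_of_mem_star {A L : Finset V} {w : V} (hw : w ∉ L)
    (hAL : Disjoint A L) {x y : V} (hx : x ∈ L)
    (hxy : ((fromRel fun u v => u ∈ A ∧ v ∈ A) ⊔ fromRel fun u v => u ∈ L ∧ v = w).Adj x y) :
    y = w := by
  simp only [sup_adj, fromRel_adj] at hxy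
  rcases hxy with ⟨-, ⟨hxA, -⟩ | ⟨-, hxA⟩⟩ | ⟨hxy, ⟨-, rfl⟩ | ⟨-, rfl⟩⟩
  · exact absurd hx (Finset.disjoint_left.mp hAL hxA)
  · exact absurd hx (Finset.disjoint_left.mp hAL hxA)
  · rfl
  · exact absurd hx hw

end SimpleGraph

theorem minRainbowDeg_eq_of_forall_exists_adj {V : Type*} [Nonempty V] {c : ℕ}
    {G : Fin c → SimpleGraph V} (h : ∀ i x, ∃ y, (G i).Adj x y) : minRainbowDeg G = c := by
  have hdeg : rainbowDeg G = fun _ => c := by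
    funext x
    have hall : {i : Fin c | ∃ y, (G i).Adj x y} = Set.univ := Set.eq_univ_of_forall (h · x)
    rw [rainbowDeg, hall, Set.ncard_univ, Nat.card_eq_fintype_card, Fintype.card_fin]
  rw [minRainbowDeg, hdeg, Set.range_const, csInf_singleton]

theorem fromRel_eq_clique_sup_star {n : ℕ} (hn : 3 < n) :
    SimpleGraph.fromRel
        (fun (u v : Fin n) => (3 ≤ (u : ℕ) ∧ 3 ≤ (v : ℕ)) ∨ ((u : ℕ) < 3 ∧ (v : ℕ) = 3)) =
      (SimpleGraph.fromRel fun u v => u ∈ Finset.Ici ⟨3, hn⟩ ∧ v ∈ Finset.Ici ⟨3, hn⟩) ⊔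
        SimpleGraph.fromRel fun u v => u ∈ Finset.Iio ⟨3, hn⟩ ∧ v = ⟨3, hn⟩ := by
  ext a b
  simp only [SimpleGraph.fromRel_adj, SimpleGraph.sup_adj, Finset.mem_Ici, Finset.mem_Iio,
    Fin.le_def, Fin.lt_def, Fin.ext_iff]
  omega

-- Colour `0` is red and `1` is blue; the vertices `0, 1, 2` are `v₁, v₂, v₃` and `3` is `v`.
/-- For every odd `n ≥ 15`, the 2-edge-coloured multigraph on `Fin n`
(colour `0` = red, colour `1` = blue) given by: a blue complete graph on the `n - 3`
vertices `A = {3, …, n-1}`, the three extra vertices `0 = v₁`, `1 = v₂`, `2 = v₃` each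
joined by a blue edge to the vertex `3 = v ∈ A`, superposed with a red complete graph on
all `n` vertices, has exactly `(n choose 2) + (n-3 choose 2) + 3` edges, satisfies
`rd(G) = 2`, and has no proper Hamiltonian path. -/
theorem stmt16 {n : ℕ} (h15 : 15 ≤ n) (hodd : Odd n) :
    ∀ G : Fin 2 → SimpleGraph (Fin n),
      G = ![⊤, SimpleGraph.fromRel
        (fun (u v : Fin n) => (3 ≤ (u : ℕ) ∧ 3 ≤ (v : ℕ)) ∨ ((u : ℕ) < 3 ∧ (v : ℕ) = 3))] →
      numEdges G = n.choose 2 + (n - 3).choose 2 + 3 ∧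
      minRainbowDeg G = 2 ∧ ¬ HasProperHamPath G := by
  rintro G rfl
  have hn : 3 < n := by omega
  have hAL : Disjoint (Finset.Ici (⟨3, hn⟩ : Fin n)) (Finset.Iio ⟨3, hn⟩) :=
    Finset.disjoint_left.mpr fun _ h₁ h₂ => (Finset.mem_Ici.mp h₁).not_gt (Finset.mem_Iio.mp h₂)
  have : Nonempty (Fin n) := ⟨⟨0, by omega⟩⟩
  rw [fromRel_eq_clique_sup_star hn]
  refine ⟨?_, minRainbowDeg_eq_of_forall_exists_adj ?_, ?_⟩
  · rw [numEdges, Fin.sum_univ_two, Matrix.cons_val_zero, Matrix.cons_val_one, Matrix.cons_val_zero,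
      SimpleGraph.ncard_edgeSet_top_s16, Fintype.card_fin, SimpleGraph.ncard_edgeSet_clique_sup_star _ _
        (by simp) hAL, Fin.card_Ici, Fin.card_Iio, Fin.val_mk, add_assoc]
  · refine Fin.forall_fin_two.mpr ⟨fun x => ?_, fun x => ?_⟩
    · have : Nontrivial (Fin n) := Fin.nontrivial_iff_two_le.mpr (by omega)
      exact (exists_ne x).imp fun _ => Ne.symm
    · simp only [Matrix.cons_val_one, Matrix.cons_val_zero, SimpleGraph.sup_adj,
        SimpleGraph.fromRel_adj, ne_eq, Finset.mem_Ici, Finset.mem_Iio, Fin.le_def, Fin.lt_def,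
        Fin.ext_iff]
      by_cases hx : (x : ℕ) = 3
      · exact ⟨⟨0, by omega⟩, by dsimp only; omega⟩
      · exact ⟨⟨3, hn⟩, by dsimp only; omega⟩
  · exact not_hasProperHamPath_of_forall_adj_eq (by rwa [Fintype.card_fin]) (b := 1)
      (S := Finset.Iio ⟨3, hn⟩) (by simp) fun _ hx _ =>
        SimpleGraph.eq_of_adj_of_mem_star (by simp) hAL hx
end

section
/- For every n ≥ 9 and every c with 3 ≤ c < n/2, the following c-edge-coloured multigraph on n vertices is connected, has exactly c·(n-2 choose 2) + n − 1 edges, and has no proper Hamiltonian path: take a rainbow complete c-edge-coloured multigraph A on n−2 vertices, add two new vertices x and y, and, all in one fixed colour, add the edge xy together with an edge from y to every vertex of A. -/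
/-! The vertex `x` has `y` as its only neighbour, and every edge at `y` has colour `0`. A vertex
whose only neighbour is `y` must be an end of any path, while a vertex in the interior of a
proper path meets edges of two different colours, so it cannot be `y`. In a proper Hamiltonian
path on at least three vertices, `x` is therefore an end and its successor `y` is interior: a
contradiction. -/

open SimpleGraph

namespace IsProperPathOn

variable {V : Type*} {c : ℕ} {G : Fin c → SimpleGraph V} {m : ℕ} {v : ℕ → V} {κ : ℕ → Fin c}
  {j : ℕ}

lemma adj_succ (hP : IsProperPathOn G m v κ) (hj : j + 1 < m) :
    (G (κ j)).Adj (v j) (v (j + 1)) :=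
  hP.2.1 j hj

lemma adj_pred (hP : IsProperPathOn G m v κ) (h0 : 0 < j) (hj : j < m) :
    (G (κ (j - 1))).Adj (v j) (v (j - 1)) := by
  have h := hP.adj_succ (j := j - 1) (by omega)
  rw [Nat.sub_add_cancel h0] at h
  exact h.symm

lemma colour_pred_ne (hP : IsProperPathOn G m v κ) (h0 : 0 < j) (hj : j + 1 < m) :
    κ (j - 1) ≠ κ j := by
  have h := hP.2.2 (j - 1) (by omega)
  rwa [Nat.sub_add_cancel h0] at h

lemma apply_ne_of_forall_adj_colour_eq (hP : IsProperPathOn G m v κ) {y : V} {r : Fin c}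
    (hy : ∀ i z, (G i).Adj y z → i = r) (h0 : 0 < j) (hj : j + 1 < m) : v j ≠ y := by
  rintro rfl
  exact hP.colour_pred_ne h0 hj
    ((hy _ _ (hP.adj_pred h0 (by omega))).trans (hy _ _ (hP.adj_succ hj)).symm)

lemma eq_zero_or_succ_eq_of_forall_adj_eq (hP : IsProperPathOn G m v κ) {x y : V}
    (hx : ∀ i z, (G i).Adj x z → z = y) (hj : j < m) (hvj : v j = x) : j = 0 ∨ j + 1 = m := by
  by_contra! hne
  have hpred := hx _ _ (hvj ▸ hP.adj_pred (by omega) hj)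
  have hsucc := hx _ _ (hvj ▸ hP.adj_succ (by omega))
  have := hP.1 (Set.mem_Iio.mpr (by omega)) (Set.mem_Iio.mpr (by omega)) (hpred.trans hsucc.symm)
  omega

end IsProperPathOn

theorem not_hasProperHamPath_of_pendant {V : Type*} [Fintype V] {c : ℕ}
    {G : Fin c → SimpleGraph V} {x y : V} {r : Fin c} (hx : ∀ i z, (G i).Adj x z → z = y)
    (hy : ∀ i z, (G i).Adj y z → i = r) (hV : 3 ≤ Fintype.card V) : ¬ HasProperHamPath G := by
  rintro ⟨v, κ, hP, hsurj⟩
  obtain ⟨j, hj, rfl⟩ := hsurj x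
  rcases hP.eq_zero_or_succ_eq_of_forall_adj_eq hx hj rfl with rfl | hjm
  · exact hP.apply_ne_of_forall_adj_colour_eq hy (j := 1) one_pos (by omega)
      (hx _ _ (hP.adj_succ (by omega)))
  · exact hP.apply_ne_of_forall_adj_colour_eq hy (j := j - 1) (by omega) (by omega)
      (hx _ _ (hP.adj_pred (by omega) hj))

namespace SimpleGraph

variable {V : Type*}

def completeOn (A : Set V) : SimpleGraph V :=
  fromRel fun u v => u ∈ A ∧ v ∈ A

lemma completeOn_eq_map (A : Set V) :
    completeOn A = (⊤ : SimpleGraph A).map (Function.Embedding.subtype _) := by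
  ext u v
  rw [completeOn, fromRel_adj, map_adj]
  simp only [top_adj, Function.Embedding.coe_subtype]
  constructor
  · rintro ⟨huv, ⟨hu, hv⟩ | ⟨hv, hu⟩⟩ <;>
      exact ⟨⟨u, hu⟩, ⟨v, hv⟩, fun h => huv (congrArg Subtype.val h), rfl, rfl⟩
  · rintro ⟨u, v, huv, rfl, rfl⟩
    exact ⟨Subtype.val_injective.ne huv, Or.inl ⟨u.2, v.2⟩⟩

lemma ncard_edgeSet_top_s18 (W : Type*) [Finite W] :
    (⊤ : SimpleGraph W).edgeSet.ncard = (Nat.card W).choose 2 := by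
  have := Fintype.ofFinite W
  classical
  rw [← Nat.card_coe_set_eq, Nat.card_eq_fintype_card, ← edgeFinset_card,
    card_edgeFinset_top_eq_card_choose_two, Nat.card_eq_fintype_card]

lemma ncard_edgeSet_completeOn {A : Set V} (hA : A.Finite) :
    (completeOn A).edgeSet.ncard = A.ncard.choose 2 := by
  have := hA.to_subtype
  rw [completeOn_eq_map, edgeSet_map,
    Set.ncard_image_of_injective _ (Function.Embedding.subtype _).sym2Map.injective,
    ncard_edgeSet_top_s18, Nat.card_coe_set_eq]

lemma ncard_edgeSet_starGraph [Finite V] (y : V) :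
    (starGraph y).edgeSet.ncard = Nat.card V - 1 := by
  have := Fintype.ofFinite V
  classical
  have h := (isTree_starGraph y).card_edgeFinset
  rw [← Nat.card_coe_set_eq, Nat.card_eq_fintype_card, ← edgeFinset_card, Nat.card_eq_fintype_card]
  omega

end SimpleGraph

lemma Fin.ncard_setOf_le_val (n k : ℕ) : {u : Fin n | k ≤ (u : ℕ)}.ncard = n - k := by
  rw [Set.ncard_eq_toFinset_card', Set.toFinset_ofPred]
  have hlt := Fin.card_filter_val_lt (n := n) (m := k)
  have hsum := Finset.card_filter_add_card_filter_not (s := Finset.univ)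
    (fun u : Fin n => (u : ℕ) < k)
  simp only [not_lt, Finset.card_univ, Fintype.card_fin] at hsum
  omega

section RainbowWithPendant

variable {V : Type*} {c : ℕ} {A : Set V} {y : V} {r : Fin c}

/-- When `V = A ∪ {x, y}`, the star at `y` consists of the edge `xy` and the edges from `y`
to `A`. -/
def rainbowWithPendant (A : Set V) (y : V) (r : Fin c) : Fin c → SimpleGraph V :=
  fun i => if i = r then completeOn A ⊔ starGraph y else completeOn A

lemma connected_iSup_rainbowWithPendant : (⨆ i, rainbowWithPendant A y r i).Connected :=
  (connected_starGraph y).mono (le_iSup_of_le r (by simp [rainbowWithPendant]))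

lemma numEdges_rainbowWithPendant [Finite V] (hy : y ∉ A) :
    numEdges (rainbowWithPendant A y r) = c * A.ncard.choose 2 + (Nat.card V - 1) := by
  have hdisj : Disjoint (completeOn A).edgeSet (starGraph y).edgeSet := by
    refine Set.disjoint_left.mpr fun e hK hS => ?_
    induction e using Sym2.ind with
    | _ u v =>
      simp only [mem_edgeSet, completeOn, fromRel_adj, starGraph_adj] at hK hS
      grind
  have hcard : ∀ i, (rainbowWithPendant A y r i).edgeSet.ncard =
      (completeOn A).edgeSet.ncard + if i = r then (starGraph y).edgeSet.ncard else 0 := by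
    intro i
    by_cases hi : i = r
    · simp only [rainbowWithPendant, if_pos hi, edgeSet_sup]
      exact Set.ncard_union_eq hdisj
    · simp [rainbowWithPendant, hi]
  rw [numEdges, Finset.sum_congr rfl fun i _ => hcard i, Finset.sum_add_distrib,
    Finset.sum_ite_eq', if_pos (Finset.mem_univ r), Finset.sum_const, Finset.card_univ,
    Fintype.card_fin, smul_eq_mul, ncard_edgeSet_completeOn A.toFinite,
    ncard_edgeSet_starGraph]

lemma not_hasProperHamPath_rainbowWithPendant [Fintype V] {x : V} (hxA : x ∉ A) (hyA : y ∉ A)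
    (hxy : x ≠ y) (hV : 3 ≤ Fintype.card V) : ¬ HasProperHamPath (rainbowWithPendant A y r) := by
  refine not_hasProperHamPath_of_pendant (x := x) (y := y) (r := r) ?_ ?_ hV
  · intro i z h
    by_cases hi : i = r <;>
      simp only [rainbowWithPendant, hi, if_true, if_false, sup_adj, completeOn, fromRel_adj,
        starGraph_adj] at h <;> grind
  · intro i z h
    by_contra hi
    simp only [rainbowWithPendant, hi, if_false, completeOn, fromRel_adj] at h
    grind

end RainbowWithPendant

lemma fromRel_colouring_eq_rainbowWithPendant {n c : ℕ} (hn : 1 < n) (hc : 0 < c) :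
    (fun (i : Fin c) => if (i : ℕ) = 0 then
        SimpleGraph.fromRel (fun (u v : Fin n) => (u : ℕ) = 1 ∨ (2 ≤ (u : ℕ) ∧ 2 ≤ (v : ℕ)))
      else
        SimpleGraph.fromRel (fun (u v : Fin n) => 2 ≤ (u : ℕ) ∧ 2 ≤ (v : ℕ))) =
      rainbowWithPendant {u : Fin n | 2 ≤ (u : ℕ)} ⟨1, hn⟩ ⟨0, hc⟩ := by
  funext i
  simp only [rainbowWithPendant, Fin.ext_iff]
  split_ifs
  · ext u v
    simp only [completeOn, sup_adj, fromRel_adj, starGraph_adj, Fin.ext_iff, Set.mem_ofPred_eq]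
    omega
  · rfl

theorem stmt18_general {n c : ℕ} (h9 : 9 ≤ n) (hc : 3 ≤ c) :
    ∀ G : Fin c → SimpleGraph (Fin n),
      G = (fun (i : Fin c) => if (i : ℕ) = 0 then
              SimpleGraph.fromRel (fun (u v : Fin n) => (u : ℕ) = 1 ∨ (2 ≤ (u : ℕ) ∧ 2 ≤ (v : ℕ)))
            else
              SimpleGraph.fromRel (fun (u v : Fin n) => 2 ≤ (u : ℕ) ∧ 2 ≤ (v : ℕ))) →
      (⨆ i, G i).Connected ∧
      numEdges G = c * (n - 2).choose 2 + n - 1 ∧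
      ¬ HasProperHamPath G := by
  rintro G rfl
  rw [fromRel_colouring_eq_rainbowWithPendant (by omega) (by omega)]
  refine ⟨connected_iSup_rainbowWithPendant, ?_,
    not_hasProperHamPath_rainbowWithPendant (x := ⟨0, by omega⟩) (by simp) (by simp)
      (by simp [Fin.ext_iff]) (by rw [Fintype.card_fin]; omega)⟩
  rw [numEdges_rainbowWithPendant (by simp), Fin.ncard_setOf_le_val, Nat.card_eq_fintype_card,
    Fintype.card_fin, Nat.add_sub_assoc (by omega)]

/-- For every `n ≥ 9` and `3 ≤ c < n/2`, the `c`-edge-coloured multigraph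
on `Fin n` obtained from a rainbow complete `c`-edge-coloured multigraph on the `n - 2`
vertices `A = {2, …, n-1}` by adding the two vertices `0 = x` and `1 = y` together with, all
in the fixed colour `0`, the edge `xy` and an edge from `y` to every vertex of `A`, is
connected, has exactly `c·(n-2 choose 2) + n - 1` edges, and has no proper Hamiltonian
path. -/
theorem stmt18 {n c : ℕ} (h9 : 9 ≤ n) (hc : 3 ≤ c) (hcn : 2 * c < n) :
    ∀ G : Fin c → SimpleGraph (Fin n),
      G = (fun (i : Fin c) => if (i : ℕ) = 0 then
              SimpleGraph.fromRel (fun (u v : Fin n) => (u : ℕ) = 1 ∨ (2 ≤ (u : ℕ) ∧ 2 ≤ (v : ℕ)))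
            else
              SimpleGraph.fromRel (fun (u v : Fin n) => 2 ≤ (u : ℕ) ∧ 2 ≤ (v : ℕ))) →
      (⨆ i, G i).Connected ∧
      numEdges G = c * (n - 2).choose 2 + n - 1 ∧
      ¬ HasProperHamPath G :=
  stmt18_general h9 hc
end
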